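/- arXiv:1107.3350 — 2 statements merged into one kernel-verified Lean document; each statement's English description precedes it below -/
import Mathlib

section
/- The Laplacian mechanism provides ε-differential privacy in one dimension: let Q : ℝ^n → ℝ have sensitivity Δ, meaning |Q(D₁) - Q(D₂)| ≤ Δ for all neighboring D₁, D₂ (i.e., ‖D₁ - D₂‖₁ ≤ 1). Then for the mechanism K(D) = Q(D) + η with η ~ Lap(Δ/ε), and for every measurable set Sub ⊆ ℝ and all neighboring D₁, D₂: Prob(K(D₁) ∈ Sub) ≤ e^ε · Prob(K(D₂) ∈ Sub). -/
/-!
The output densities of `K(D₁)` and `K(D₂)` are Laplace densities centred at `Q D₁` and `Q D₂`.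
By the triangle inequality in the exponent they differ pointwise by a factor at most
`exp (|Q D₁ - Q D₂| / (Δ / ε)) ≤ exp ε`, and integrating over `Sub` preserves this bound.
-/

open MeasureTheory Real

noncomputable def laplacePDFReal (μ b x : ℝ) : ℝ := 1 / (2 * b) * exp (-|x - μ| / b)

lemma laplacePDFReal_nonneg {b : ℝ} (hb : 0 ≤ b) (μ x : ℝ) : 0 ≤ laplacePDFReal μ b x := by
  unfold laplacePDFReal
  positivity

lemma integrable_exp_neg_abs_div {b : ℝ} (hb : 0 < b) :
    Integrable fun x : ℝ => exp (-|x| / b) := by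
  have hneg : IntegrableOn (fun x : ℝ => exp (-|x| / b)) (Set.Iic 0) :=
    (integrableOn_exp_mul_Iic (inv_pos.2 hb) 0).congr_fun
      (fun x hx => by rw [abs_of_nonpos hx]; ring_nf) measurableSet_Iic
  have hpos : IntegrableOn (fun x : ℝ => exp (-|x| / b)) (Set.Ioi 0) :=
    (integrableOn_exp_mul_Ioi (neg_lt_zero.2 (inv_pos.2 hb)) 0).congr_fun
      (fun x hx => by rw [abs_of_pos hx]; ring_nf) measurableSet_Ioi
  rw [← integrableOn_univ, ← Set.Iic_union_Ioi (a := (0 : ℝ))]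
  exact hneg.union hpos

lemma integrable_laplacePDFReal {b : ℝ} (hb : 0 < b) (μ : ℝ) :
    Integrable (laplacePDFReal μ b) :=
  ((integrable_exp_neg_abs_div hb).comp_sub_right μ).const_mul _

lemma laplacePDFReal_le_exp_mul {b : ℝ} (hb : 0 ≤ b) (μ ν x : ℝ) :
    laplacePDFReal μ b x ≤ exp (|μ - ν| / b) * laplacePDFReal ν b x := by
  have htri : |x - ν| ≤ |x - μ| + |μ - ν| := abs_sub_le x μ ν
  have hexp : -|x - μ| / b ≤ |μ - ν| / b + -|x - ν| / b := by
    rw [← add_div]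
    exact div_le_div_of_nonneg_right (by linarith) hb
  calc laplacePDFReal μ b x ≤ 1 / (2 * b) * exp (|μ - ν| / b + -|x - ν| / b) := by
        unfold laplacePDFReal
        gcongr
    _ = exp (|μ - ν| / b) * laplacePDFReal ν b x := by
        rw [laplacePDFReal, exp_add]
        ring

lemma setIntegral_laplacePDFReal_le {b : ℝ} (hb : 0 < b) (s : Set ℝ) (μ ν : ℝ) :
    ∫ x in s, laplacePDFReal μ b x ≤ exp (|μ - ν| / b) * ∫ x in s, laplacePDFReal ν b x := by
  rw [← integral_const_mul]
  exact setIntegral_mono (integrable_laplacePDFReal hb μ).integrableOn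
    ((integrable_laplacePDFReal hb ν).const_mul _).integrableOn
    (laplacePDFReal_le_exp_mul hb.le μ ν)

theorem laplace_mechanism_DP_general (n : ℕ) (Q : (Fin n → ℝ) → ℝ) (Δ ε : ℝ)
    (hΔ : 0 < Δ) (hε : 0 < ε)
    (hsens : ∀ D₁ D₂ : Fin n → ℝ, (∑ i, |D₁ i - D₂ i|) ≤ 1 → |Q D₁ - Q D₂| ≤ Δ)
    (D₁ D₂ : Fin n → ℝ) (hneighbor : (∑ i, |D₁ i - D₂ i|) ≤ 1)
    (Sub : Set ℝ) :
    (∫ y in Sub, (1 / (2 * (Δ / ε))) * Real.exp (-|y - Q D₁| / (Δ / ε))) ≤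
      Real.exp ε * (∫ y in Sub, (1 / (2 * (Δ / ε))) * Real.exp (-|y - Q D₂| / (Δ / ε))) := by
  have hb : 0 < Δ / ε := div_pos hΔ hε
  have hshift : |Q D₁ - Q D₂| / (Δ / ε) ≤ ε := by
    rw [div_le_iff₀ hb, mul_div_cancel₀ Δ hε.ne']
    exact hsens D₁ D₂ hneighbor
  calc ∫ y in Sub, laplacePDFReal (Q D₁) (Δ / ε) y
      ≤ exp (|Q D₁ - Q D₂| / (Δ / ε)) * ∫ y in Sub, laplacePDFReal (Q D₂) (Δ / ε) y :=
        setIntegral_laplacePDFReal_le hb Sub (Q D₁) (Q D₂)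
    _ ≤ exp ε * ∫ y in Sub, laplacePDFReal (Q D₂) (Δ / ε) y :=
        mul_le_mul_of_nonneg_right (exp_le_exp.2 hshift)
          (integral_nonneg (laplacePDFReal_nonneg hb.le (Q D₂)))

/-- The one-dimensional Laplacian mechanism provides `ε`-differential privacy: if the query
`Q` has sensitivity `Δ` over neighboring databases (ℓ₁-distance ≤ 1), then adding
`Lap(Δ/ε)` noise to `Q(D)` satisfies, for every measurable `Sub ⊆ ℝ`,
`Prob(K(D₁) ∈ Sub) ≤ e^ε · Prob(K(D₂) ∈ Sub)`, where the output density of `K(D)` is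
`y ↦ g(y - Q(D))` with `g` the `Lap(Δ/ε)` density. -/
theorem laplace_mechanism_DP (n : ℕ) (Q : (Fin n → ℝ) → ℝ) (Δ ε : ℝ)
    (hΔ : 0 < Δ) (hε : 0 < ε)
    (hsens : ∀ D₁ D₂ : Fin n → ℝ, (∑ i, |D₁ i - D₂ i|) ≤ 1 → |Q D₁ - Q D₂| ≤ Δ)
    (D₁ D₂ : Fin n → ℝ) (hneighbor : (∑ i, |D₁ i - D₂ i|) ≤ 1)
    (Sub : Set ℝ) (hSub : MeasurableSet Sub) :
    (∫ y in Sub, (1 / (2 * (Δ / ε))) * Real.exp (-|y - Q D₁| / (Δ / ε))) ≤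
      Real.exp ε * (∫ y in Sub, (1 / (2 * (Δ / ε))) * Real.exp (-|y - Q D₂| / (Δ / ε))) :=
  laplace_mechanism_DP_general n Q Δ ε hΔ hε hsens D₁ D₂ hneighbor Sub
end

section
/- The exponential mechanism is ε-differentially private: let u : ℝ^n × Y → ℝ be a utility function on a finite output set Y with sensitivity Δu, meaning |u(D₁, y) - u(D₂, y)| ≤ Δu for all neighboring D₁, D₂ and all y ∈ Y. Then the mechanism that outputs y ∈ Y with probability proportional to e^{-ε u(D, y)/(2Δu)} satisfies: for all neighboring D₁, D₂ and every y ∈ Y, Prob(output y on D₁) ≤ e^ε · Prob(output y on D₂). -/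
/-! Changing the database moves every exponent `-ε u(D, y') / (2Δu)` by at most `ε / 2`.
Hence the numerator of the output probability grows by at most `e^{ε/2}` and the normalizing
constant shrinks by at most `e^{ε/2}`. -/

open Real

lemma exp_le_exp_mul_exp_of_abs_sub_le {a b c : ℝ} (h : |a - b| ≤ c) :
    exp a ≤ exp c * exp b := by
  rw [← exp_add]
  exact exp_le_exp.2 (by linarith [le_abs_self (a - b)])

lemma exp_div_sum_exp_le_exp_mul_of_abs_sub_le {ι : Type*} [Fintype ι] {f g : ι → ℝ} {c : ℝ}
    (h : ∀ i, |f i - g i| ≤ c / 2) (i : ι) :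
    exp (f i) / ∑ j, exp (f j) ≤ exp c * (exp (g i) / ∑ j, exp (g j)) := by
  have hSf : 0 < ∑ j, exp (f j) := Finset.sum_pos (fun j _ => exp_pos (f j)) ⟨i, Finset.mem_univ i⟩
  have hSg : 0 < ∑ j, exp (g j) := Finset.sum_pos (fun j _ => exp_pos (g j)) ⟨i, Finset.mem_univ i⟩
  have hnum : exp (f i) ≤ exp (c / 2) * exp (g i) := exp_le_exp_mul_exp_of_abs_sub_le (h i)
  have hden : ∑ j, exp (g j) ≤ exp (c / 2) * ∑ j, exp (f j) := by
    rw [Finset.mul_sum]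
    exact Finset.sum_le_sum fun j _ => exp_le_exp_mul_exp_of_abs_sub_le (abs_sub_comm (f j) _ ▸ h j)
  have hexp : exp c = exp (c / 2) * exp (c / 2) := by rw [← exp_add, add_halves]
  rw [div_le_iff₀ hSf, hexp]
  calc exp (f i) ≤ exp (c / 2) * exp (g i) := hnum
    _ = exp (c / 2) * (exp (g i) / ∑ j, exp (g j)) * ∑ j, exp (g j) := by field_simp
    _ ≤ exp (c / 2) * (exp (g i) / ∑ j, exp (g j)) * (exp (c / 2) * ∑ j, exp (f j)) := by
        gcongr
    _ = _ := by ring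

lemma abs_neg_mul_div_sub_neg_mul_div_le {ε a b d : ℝ} (hε : 0 ≤ ε) (h : |a - b| ≤ d) :
    |-ε * a / (2 * d) - -ε * b / (2 * d)| ≤ ε / 2 := by
  have hscale : -ε * a / (2 * d) - -ε * b / (2 * d) = ε / 2 * ((b - a) / d) := by ring
  rw [hscale, abs_mul, abs_of_nonneg (by positivity : 0 ≤ ε / 2), abs_div, abs_sub_comm]
  refine mul_le_of_le_one_right (by positivity) (div_le_one_of_le₀ ?_ (abs_nonneg d))
  exact h.trans (le_abs_self d)

theorem exponential_mechanism_dp_general (n : ℕ) {Y : Type*} [Fintype Y]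
    (u : (Fin n → ℝ) → Y → ℝ) (Δu ε : ℝ) (hε : 0 ≤ ε)
    (hsens : ∀ D₁ D₂ : Fin n → ℝ, (∑ i, |D₁ i - D₂ i|) ≤ 1 →
      ∀ y : Y, |u D₁ y - u D₂ y| ≤ Δu)
    (D₁ D₂ : Fin n → ℝ) (hneighbor : (∑ i, |D₁ i - D₂ i|) ≤ 1) (y : Y) :
    Real.exp (-ε * u D₁ y / (2 * Δu)) / (∑ y' : Y, Real.exp (-ε * u D₁ y' / (2 * Δu))) ≤
      Real.exp ε *
        (Real.exp (-ε * u D₂ y / (2 * Δu)) /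
          (∑ y' : Y, Real.exp (-ε * u D₂ y' / (2 * Δu)))) :=
  exp_div_sum_exp_le_exp_mul_of_abs_sub_le
    (fun y' => abs_neg_mul_div_sub_neg_mul_div_le hε (hsens D₁ D₂ hneighbor y')) y

/-- The exponential mechanism is `ε`-differentially private: for a utility function `u`
with sensitivity `Δu` on a finite output set `Y`, outputting `y` with probability
proportional to `e^{-ε u(D,y)/(2Δu)}` satisfies the `ε`-DP pointwise inequality. -/
theorem exponential_mechanism_dp (n : ℕ) {Y : Type*} [Fintype Y] [Nonempty Y]
    (u : (Fin n → ℝ) → Y → ℝ) (Δu ε : ℝ) (hΔu : 0 < Δu) (hε : 0 ≤ ε)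
    (hsens : ∀ D₁ D₂ : Fin n → ℝ, (∑ i, |D₁ i - D₂ i|) ≤ 1 →
      ∀ y : Y, |u D₁ y - u D₂ y| ≤ Δu)
    (D₁ D₂ : Fin n → ℝ) (hneighbor : (∑ i, |D₁ i - D₂ i|) ≤ 1) (y : Y) :
    Real.exp (-ε * u D₁ y / (2 * Δu)) / (∑ y' : Y, Real.exp (-ε * u D₁ y' / (2 * Δu))) ≤
      Real.exp ε *
        (Real.exp (-ε * u D₂ y / (2 * Δu)) /
          (∑ y' : Y, Real.exp (-ε * u D₂ y' / (2 * Δu)))) :=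
  exponential_mechanism_dp_general n u Δu ε hε hsens D₁ D₂ hneighbor y
end
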